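/- arXiv:1908.00158 — 7 statements merged into one kernel-verified Lean document; each statement's English description precedes it below -/
import Mathlib

section
/- Let (E_i)_{i∈I} be a finite family of d×d complex matrices with Σ_{i∈I} E_iᴴ E_i ≼ I in the Löwner order (i.e., the super-operator E(ρ) = Σ_i E_i ρ E_iᴴ is trace-non-increasing). Then every complex eigenvalue λ of the d²×d² matrix M = Σ_{i∈I} E_i ⊗ conj(E_i) (Kronecker product, with conj denoting entrywise complex conjugation) satisfies |λ| ≤ 1. -/
/-!
Acting on row vectors `vec X`, the matrix representation `M` is the adjoint channel
`Φ(X) = Σ E_iᴴ X E_i`, so an eigenvalue `λ` of `M` yields `Y ≠ 0` with `Φ(Y) = λ • Y`.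
The hypothesis `Σ E_iᴴ E_i ≼ 1` means `Σ ‖E_i u‖² ≤ ‖u‖²`, which makes `Φ` a contraction for
the numerical radius `w(Z) = sup_{‖u‖ = 1} |u* Z u|`. Hence `|λ|ᵏ w(Y) = w(Φᵏ Y) ≤ w(Y)` for all
`k`, and `w(Y) > 0` because a complex matrix with vanishing quadratic form is zero.
-/

open Matrix Kronecker ComplexOrder

theorem le_one_of_forall_pow_mul_le {r a b : ℝ} (ha : 0 < a) (h : ∀ k : ℕ, r ^ k * a ≤ b) :
    r ≤ 1 := by
  by_contra! hr
  obtain ⟨k, hk⟩ := pow_unbounded_of_one_lt (b / a) hr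
  rw [div_lt_iff₀ ha] at hk
  linarith [h k]

namespace Matrix

variable {ι n 𝕜 : Type*} [Fintype ι] [Fintype n] [RCLike 𝕜]

def NumericalRadiusLE (Y : Matrix n n 𝕜) (c : ℝ) : Prop :=
  ∀ u : n → 𝕜, ‖star u ⬝ᵥ Y *ᵥ u‖ ≤ c * RCLike.re (star u ⬝ᵥ u)

theorem exists_numericalRadiusLE (Y : Matrix n n 𝕜) : ∃ c, 0 ≤ c ∧ NumericalRadiusLE Y c := by
  classical
  refine ⟨‖toEuclideanCLM (𝕜 := 𝕜) Y‖, norm_nonneg _, fun u => ?_⟩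
  set x : EuclideanSpace 𝕜 n := WithLp.toLp 2 u
  have hnorm : RCLike.re (star u ⬝ᵥ u) = ‖x‖ ^ 2 := by
    rw [← inner_self_eq_norm_sq (𝕜 := 𝕜), EuclideanSpace.inner_toLp_toLp, dotProduct_comm]
  calc ‖star u ⬝ᵥ Y *ᵥ u‖ = ‖inner 𝕜 x (toEuclideanCLM (𝕜 := 𝕜) Y x)‖ := by
        rw [toEuclideanCLM_toLp, EuclideanSpace.inner_toLp_toLp, dotProduct_comm]
    _ ≤ ‖x‖ * ‖toEuclideanCLM (𝕜 := 𝕜) Y x‖ := norm_inner_le_norm _ _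
    _ ≤ ‖x‖ * (‖toEuclideanCLM (𝕜 := 𝕜) Y‖ * ‖x‖) := by
        gcongr
        exact ContinuousLinearMap.le_opNorm _ _
    _ = ‖toEuclideanCLM (𝕜 := 𝕜) Y‖ * RCLike.re (star u ⬝ᵥ u) := by
        rw [hnorm]
        ring

theorem star_dotProduct_conjTranspose_mul_mul_mulVec (A Z : Matrix n n 𝕜) (u : n → 𝕜) :
    star u ⬝ᵥ (Aᴴ * Z * A) *ᵥ u = star (A *ᵥ u) ⬝ᵥ Z *ᵥ (A *ᵥ u) := by
  rw [← mulVec_mulVec, ← mulVec_mulVec, dotProduct_mulVec, ← star_mulVec]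

theorem PosSemidef.sum_re_star_dotProduct_le [DecidableEq n] {E : ι → Matrix n n 𝕜}
    (hE : (1 - ∑ i, (E i)ᴴ * E i).PosSemidef) (u : n → 𝕜) :
    ∑ i, RCLike.re (star (E i *ᵥ u) ⬝ᵥ E i *ᵥ u) ≤ RCLike.re (star u ⬝ᵥ u) := by
  have hquad (i : ι) : star u ⬝ᵥ ((E i)ᴴ * E i) *ᵥ u = star (E i *ᵥ u) ⬝ᵥ E i *ᵥ u := by
    rw [← mulVec_mulVec, dotProduct_mulVec, ← star_mulVec]
  have hnonneg := hE.re_dotProduct_nonneg u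
  simp only [sub_mulVec, one_mulVec, dotProduct_sub, map_sub, sum_mulVec, dotProduct_sum,
    map_sum, hquad] at hnonneg
  linarith

theorem NumericalRadiusLE.sum_conjTranspose_mul_mul [DecidableEq n] {E : ι → Matrix n n 𝕜}
    (hE : (1 - ∑ i, (E i)ᴴ * E i).PosSemidef) {Z : Matrix n n 𝕜} {c : ℝ} (hc : 0 ≤ c)
    (hZ : NumericalRadiusLE Z c) : NumericalRadiusLE (∑ i, (E i)ᴴ * Z * E i) c := fun u =>
  calc ‖star u ⬝ᵥ (∑ i, (E i)ᴴ * Z * E i) *ᵥ u‖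
      = ‖∑ i, star (E i *ᵥ u) ⬝ᵥ Z *ᵥ (E i *ᵥ u)‖ := by
        simp only [sum_mulVec, dotProduct_sum, star_dotProduct_conjTranspose_mul_mul_mulVec]
    _ ≤ ∑ i, ‖star (E i *ᵥ u) ⬝ᵥ Z *ᵥ (E i *ᵥ u)‖ := norm_sum_le _ _
    _ ≤ ∑ i, c * RCLike.re (star (E i *ᵥ u) ⬝ᵥ E i *ᵥ u) :=
        Finset.sum_le_sum fun i _ => hZ _
    _ = c * ∑ i, RCLike.re (star (E i *ᵥ u) ⬝ᵥ E i *ᵥ u) := (Finset.mul_sum ..).symm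
    _ ≤ c * RCLike.re (star u ⬝ᵥ u) :=
        mul_le_mul_of_nonneg_left (hE.sum_re_star_dotProduct_le u) hc

theorem exists_star_dotProduct_mulVec_ne_zero {Y : Matrix n n ℂ} (hY : Y ≠ 0) :
    ∃ u, star u ⬝ᵥ Y *ᵥ u ≠ 0 := by
  classical
  contrapose! hY
  refine (toLpLin 2 2).map_eq_zero_iff.1 <| (inner_map_self_eq_zero _).1 fun x => ?_
  rw [toLpLin_apply, EuclideanSpace.inner_eq_star_dotProduct, dotProduct_comm,
    WithLp.ofLp_toLp, star_dotProduct, hY, star_zero]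

theorem norm_le_one_of_sum_conjTranspose_mul_mul_eq_smul [DecidableEq n]
    {E : ι → Matrix n n ℂ} (hE : (1 - ∑ i, (E i)ᴴ * E i).PosSemidef) {Y : Matrix n n ℂ}
    {μ : ℂ} (hY0 : Y ≠ 0) (hY : ∑ i, (E i)ᴴ * Y * E i = μ • Y) : ‖μ‖ ≤ 1 := by
  obtain ⟨c, hc, hYc⟩ := exists_numericalRadiusLE Y
  have hpow (k : ℕ) : NumericalRadiusLE (μ ^ k • Y) c := by
    induction k with
    | zero => simpa using hYc
    | succ k ih =>
      have hstep : μ ^ (k + 1) • Y = ∑ i, (E i)ᴴ * (μ ^ k • Y) * E i := by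
        simp only [Matrix.mul_smul, Matrix.smul_mul, ← Finset.smul_sum, hY, smul_smul, pow_succ]
      exact hstep ▸ ih.sum_conjTranspose_mul_mul hE hc
  obtain ⟨u, hu⟩ := exists_star_dotProduct_mulVec_ne_zero hY0
  refine le_one_of_forall_pow_mul_le (b := c * RCLike.re (star u ⬝ᵥ u)) (norm_pos_iff.2 hu)
    fun k => ?_
  simpa only [smul_mulVec, dotProduct_smul, smul_eq_mul, norm_mul, norm_pow] using hpow k u

theorem vec_vecMul_sum_kronecker_map_starRingEnd {R : Type*} [CommSemiring R] [StarRing R]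
    (E : ι → Matrix n n R) (X : Matrix n n R) :
    vec X ᵥ* (∑ i, E i ⊗ₖ (E i).map (starRingEnd R)) = vec (∑ i, (E i)ᴴ * X * E i) := by
  simp only [vecMul_sum, vec_vecMul_kronecker, vec_sum]
  rfl

theorem exists_vecMul_eq_smul_of_mem_spectrum {K : Type*} [Field K] [DecidableEq n]
    {A : Matrix n n K} {μ : K} (h : μ ∈ spectrum K A) : ∃ v ≠ 0, v ᵥ* A = μ • v := by
  rw [spectrum.mem_iff, isUnit_iff_isUnit_det, isUnit_iff_ne_zero, not_not,
    ← exists_vecMul_eq_zero_iff, Algebra.algebraMap_eq_smul_one] at h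
  obtain ⟨v, hv, hvA⟩ := h
  rw [vecMul_sub, sub_eq_zero, vecMul_smul, vecMul_one] at hvA
  exact ⟨v, hv, hvA.symm⟩

end Matrix

/-- If the super-operator with Kraus operators `(E_i)` is trace-non-increasing,
i.e. `Σ_i E_iᴴ E_i ≼ I`, then every eigenvalue `λ` of the matrix representation
`M = Σ_i E_i ⊗ conj(E_i)` satisfies `|λ| ≤ 1`. -/
theorem eigenvalue_matrixRep_le_one {d : ℕ} {I : Type} [Fintype I]
    (E : I → Matrix (Fin d) (Fin d) ℂ)
    (htni : ((1 : Matrix (Fin d) (Fin d) ℂ) - ∑ i, (E i)ᴴ * E i).PosSemidef)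
    (M : Matrix (Fin d × Fin d) (Fin d × Fin d) ℂ)
    (hM : M = ∑ i, (E i) ⊗ₖ ((E i).map (starRingEnd ℂ)))
    (lam : ℂ) (hlam : lam ∈ spectrum ℂ M) :
    ‖lam‖ ≤ 1 := by
  obtain ⟨w, hw0, hw⟩ := exists_vecMul_eq_smul_of_mem_spectrum hlam
  obtain ⟨Y, rfl⟩ := vec_bijective.surjective w
  have hY0 : Y ≠ 0 := by
    rintro rfl
    exact hw0 vec_zero
  have hY : ∑ i, (E i)ᴴ * Y * E i = lam • Y := by
    rw [← vec_inj, vec_smul, ← hw, hM, vec_vecMul_sum_kronecker_map_starRingEnd]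
  exact norm_le_one_of_sum_conjTranspose_mul_mul_eq_smul htni hY0 hY
end

section
/- Let (E_i)_{i∈I} be a finite family of d×d complex matrices with Σ_{i∈I} E_iᴴ E_i ≼ I in the Löwner order, and let M = Σ_{i∈I} E_i ⊗ conj(E_i) be the associated d²×d² matrix (Kronecker products with the entrywise complex conjugates). If λ ∈ ℂ is an eigenvalue of M with |λ| = 1, then every Jordan block of M with eigenvalue λ has size 1; equivalently, ker((M − λI)²) = ker(M − λI), i.e., the generalized eigenspace of M for λ coincides with the eigenspace. -/
/-!
The matrix `M = Σ E_i ⊗ conj(E_i)` acts on the row-major vectorization of a `d × d` matrix `X` as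
the Kraus map `X ↦ Σ E_i X E_iᴴ`. This map preserves positive semidefiniteness and, because
`Σ E_iᴴ E_i ≼ 1`, does not increase the trace; the entries of a positive semidefinite matrix are
bounded by its trace. Hence the `M`-orbit of every positive semidefinite matrix is bounded, and
since positive semidefinite matrices span all complex matrices, every `M`-orbit is bounded.
A Jordan chain `M v = λ v + w`, `M w = λ w` with `|λ| = 1` gives
`M^(k+1) v = λ^(k+1) v + (k+1) λ^k w`, which is bounded only if `w = 0`.
-/

open Matrix Kronecker ComplexOrder

namespace Module.End

variable {𝕜 V : Type*}

section BoundedOrbits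

variable [NormedField 𝕜] [SeminormedAddCommGroup V] [NormedSpace 𝕜 V]

def boundedOrbits (f : Module.End 𝕜 V) : Submodule 𝕜 V where
  carrier := {x | ∃ C, ∀ k : ℕ, ‖(f ^ k) x‖ ≤ C}
  zero_mem' := ⟨0, by simp⟩
  add_mem' := by
    rintro x y ⟨C, hC⟩ ⟨D, hD⟩
    exact ⟨C + D, fun k => by grw [map_add, norm_add_le, hC k, hD k]⟩
  smul_mem' := by
    rintro c x ⟨C, hC⟩
    exact ⟨‖c‖ * C, fun k => by grw [map_smul, norm_smul, hC k]⟩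

end BoundedOrbits

lemma pow_succ_apply_of_apply_eq_smul_add [CommRing 𝕜] [AddCommGroup V] [Module 𝕜 V]
    {f : Module.End 𝕜 V} {μ : 𝕜} {v w : V} (hw : f w = μ • w) (hv : f v = μ • v + w) (k : ℕ) :
    (f ^ (k + 1)) v = μ ^ (k + 1) • v + ((k + 1) * μ ^ k) • w := by
  induction k with
  | zero => simpa using hv
  | succ k ih =>
    rw [pow_succ', mul_apply, ih, map_add, map_smul, map_smul, hv, hw]
    push_cast
    match_scalars <;> ring

lemma ker_sq_sub_smul_eq_ker_of_boundedOrbits_eq_top [RCLike 𝕜] [NormedAddCommGroup V]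
    [NormedSpace 𝕜 V] {f : Module.End 𝕜 V} (hf : f.boundedOrbits = ⊤) {μ : 𝕜} (hμ : ‖μ‖ = 1) :
    LinearMap.ker ((f - μ • 1) ^ 2) = LinearMap.ker (f - μ • 1) := by
  refine le_antisymm (fun v hv => ?_) (pow_two (f - μ • 1) ▸ LinearMap.ker_le_ker_comp _ _)
  set w := (f - μ • 1) v
  have hw : f w = μ • w := by
    have : (f - μ • 1) w = 0 := by rwa [LinearMap.mem_ker, pow_two, mul_apply] at hv
    simpa [sub_eq_zero] using this
  have hfv : f v = μ • v + w := by simp [w]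
  obtain ⟨C, hC⟩ : v ∈ f.boundedOrbits := hf ▸ Submodule.mem_top
  have hlin (k : ℕ) : (k + 1) * ‖w‖ ≤ C + ‖v‖ := by
    have := hC (k + 1)
    rw [pow_succ_apply_of_apply_eq_smul_add hw hfv] at this
    calc (k + 1) * ‖w‖ = ‖((k + 1) * μ ^ k) • w‖ := by
          rw [norm_smul, norm_mul, norm_pow, hμ, one_pow, mul_one]; norm_cast
      _ ≤ ‖μ ^ (k + 1) • v + ((k + 1) * μ ^ k) • w‖ + ‖μ ^ (k + 1) • v‖ := norm_le_add_norm_add' _ _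
      _ ≤ C + ‖v‖ := by rw [norm_smul, norm_pow, hμ, one_pow, one_mul]; gcongr
  by_contra hw0
  obtain ⟨k, hk⟩ := exists_nat_gt ((C + ‖v‖) / ‖w‖)
  have := hlin k
  rw [div_lt_iff₀ (norm_pos_iff.mpr hw0)] at hk
  nlinarith [norm_nonneg w]

end Module.End

namespace Matrix.PosSemidef

variable {n 𝕜 : Type*} [RCLike 𝕜] {A : Matrix n n 𝕜}

lemma norm_apply_sq_le (hA : A.PosSemidef) (i j : n) :
    ‖A i j‖ ^ 2 ≤ RCLike.re (A i i) * RCLike.re (A j j) := by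
  classical
  have hdet := (hA.submatrix ![i, j]).det_nonneg
  rw [det_fin_two, submatrix_apply, submatrix_apply, submatrix_apply, submatrix_apply] at hdet
  simp only [Matrix.cons_val_zero, Matrix.cons_val_one] at hdet
  rw [← hA.isHermitian.apply j i, RCLike.star_def, RCLike.mul_conj] at hdet
  have hre := (RCLike.nonneg_iff.mp hdet).1
  rw [map_sub, ← RCLike.ofReal_pow, RCLike.ofReal_re, sub_nonneg] at hre
  have hi := RCLike.nonneg_iff.mp (hA.diag_nonneg (i := i))
  have hj := RCLike.nonneg_iff.mp (hA.diag_nonneg (i := j))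
  simpa [RCLike.mul_re, hi.2, hj.2] using hre

variable [Fintype n]

lemma re_apply_le_re_trace (hA : A.PosSemidef) (i : n) :
    RCLike.re (A i i) ≤ RCLike.re A.trace := by
  rw [trace, map_sum]
  exact Finset.single_le_sum (f := fun j => RCLike.re (A j j))
    (fun j _ => (RCLike.nonneg_iff.mp hA.diag_nonneg).1) (Finset.mem_univ i)

lemma norm_apply_le_re_trace (hA : A.PosSemidef) (i j : n) : ‖A i j‖ ≤ RCLike.re A.trace := by
  have hi := hA.re_apply_le_re_trace i
  have hj := hA.re_apply_le_re_trace j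
  have hi0 := (RCLike.nonneg_iff.mp (hA.diag_nonneg (i := i))).1
  have hj0 := (RCLike.nonneg_iff.mp (hA.diag_nonneg (i := j))).1
  refine le_of_sq_le_sq ?_ (hi0.trans hi)
  calc ‖A i j‖ ^ 2 ≤ RCLike.re (A i i) * RCLike.re (A j j) := hA.norm_apply_sq_le i j
    _ ≤ RCLike.re A.trace ^ 2 := by nlinarith

open scoped MatrixOrder in
lemma trace_mul_nonneg {B : Matrix n n 𝕜} (hA : A.PosSemidef) (hB : B.PosSemidef) :
    0 ≤ (A * B).trace := by
  classical
  set R := CFC.sqrt B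
  have hR : Rᴴ = R := (CFC.sqrt_nonneg B).posSemidef.isHermitian
  rw [← CFC.sqrt_mul_sqrt_self B hB.nonneg, ← Matrix.mul_assoc, trace_mul_comm,
    ← Matrix.mul_assoc]
  simpa [hR] using (hA.mul_mul_conjTranspose_same R).trace_nonneg

end Matrix.PosSemidef

lemma Matrix.span_posSemidef_eq_top {n : Type*} [Fintype n] [DecidableEq n] :
    Submodule.span ℂ {A : Matrix n n ℂ | A.PosSemidef} = ⊤ := by
  open scoped Matrix.Norms.L2Operator MatrixOrder in
  simpa [Matrix.nonneg_iff_posSemidef] using CStarAlgebra.span_nonneg (A := Matrix n n ℂ)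

section Kraus

variable {ι n 𝕜 : Type*} [Fintype ι] [Fintype n] [RCLike 𝕜] (E : ι → Matrix n n 𝕜)

def krausMap (X : Matrix n n 𝕜) : Matrix n n 𝕜 := ∑ i, E i * X * (E i)ᴴ

def krausMatrix : Matrix (n × n) (n × n) 𝕜 := ∑ i, E i ⊗ₖ ((E i).map (starRingEnd 𝕜))

variable {E}

lemma Matrix.PosSemidef.krausMap {X : Matrix n n 𝕜} (hX : X.PosSemidef) :
    (krausMap E X).PosSemidef :=
  Finset.sum_induction _ _ (fun _ _ => PosSemidef.add) PosSemidef.zero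
    fun i _ => hX.mul_mul_conjTranspose_same (E i)

lemma trace_krausMap (X : Matrix n n 𝕜) :
    (krausMap E X).trace = ((∑ i, (E i)ᴴ * E i) * X).trace := by
  simp only [krausMap, trace_sum, Finset.sum_mul]
  exact Finset.sum_congr rfl fun i _ => by rw [trace_mul_comm, Matrix.mul_assoc]

lemma re_trace_krausMap_le [DecidableEq n] (hE : (1 - ∑ i, (E i)ᴴ * E i).PosSemidef)
    {X : Matrix n n 𝕜} (hX : X.PosSemidef) :
    RCLike.re (krausMap E X).trace ≤ RCLike.re X.trace := by
  have := (RCLike.nonneg_iff.mp (hE.trace_mul_nonneg hX)).1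
  rw [Matrix.sub_mul, Matrix.one_mul, trace_sub, map_sub, ← trace_krausMap] at this
  linarith

lemma krausMatrix_mulVec_uncurry (X : Matrix n n 𝕜) :
    krausMatrix E *ᵥ Function.uncurry X = Function.uncurry (krausMap E X) := by
  have hvec (Y : Matrix n n 𝕜) : Function.uncurry Y = vec Yᵀ := rfl
  simp only [krausMatrix, krausMap, hvec, sum_mulVec, kronecker_mulVec_vec, transpose_sum, vec_sum,
    transpose_mul, conjTranspose_transpose, RCLike.star_def, Matrix.mul_assoc]

lemma krausMatrix_pow_mulVec_uncurry [DecidableEq n] (k : ℕ) (X : Matrix n n 𝕜) :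
    (krausMatrix E ^ k) *ᵥ Function.uncurry X = Function.uncurry ((krausMap E)^[k] X) := by
  induction k with
  | zero => simp
  | succ k ih =>
    rw [pow_succ', ← mulVec_mulVec, ih, krausMatrix_mulVec_uncurry, Function.iterate_succ_apply']

lemma norm_krausMatrix_pow_mulVec_uncurry_le [DecidableEq n]
    (hE : (1 - ∑ i, (E i)ᴴ * E i).PosSemidef) {P : Matrix n n 𝕜} (hP : P.PosSemidef) (k : ℕ) :
    ‖(krausMatrix E ^ k) *ᵥ Function.uncurry P‖ ≤ RCLike.re P.trace := by
  have hiter : ((krausMap E)^[k] P).PosSemidef ∧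
      RCLike.re ((krausMap E)^[k] P).trace ≤ RCLike.re P.trace := by
    induction k with
    | zero => exact ⟨hP, le_rfl⟩
    | succ k ih =>
      rw [Function.iterate_succ_apply']
      exact ⟨ih.1.krausMap, (re_trace_krausMap_le hE ih.1).trans ih.2⟩
  rw [krausMatrix_pow_mulVec_uncurry, pi_norm_le_iff_of_nonneg
    ((RCLike.nonneg_iff.mp hP.trace_nonneg).1)]
  exact fun ij => (hiter.1.norm_apply_le_re_trace ij.1 ij.2).trans hiter.2

end Kraus

lemma boundedOrbits_toLin'_krausMatrix_eq_top {ι n : Type*} [Fintype ι] [Fintype n] [DecidableEq n]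
    {E : ι → Matrix n n ℂ} (hE : (1 - ∑ i, (E i)ᴴ * E i).PosSemidef) :
    Module.End.boundedOrbits (toLin' (krausMatrix E)) = ⊤ := by
  have huncurry (X : Matrix n n ℂ) :
      Function.uncurry X ∈ Module.End.boundedOrbits (toLin' (krausMatrix E)) := by
    have hX : X ∈ Submodule.span ℂ {P : Matrix n n ℂ | P.PosSemidef} :=
      span_posSemidef_eq_top (n := n) ▸ Submodule.mem_top
    induction hX using Submodule.span_induction with
    | mem P hP => exact ⟨_, fun k => by
        rw [← toLin'_pow, toLin'_apply]
        exact norm_krausMatrix_pow_mulVec_uncurry_le hE hP k⟩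
    | zero => exact zero_mem _
    | add X Y _ _ hX hY => exact add_mem hX hY
    | smul c X _ hX => exact Submodule.smul_mem _ c hX
  exact eq_top_iff.mpr fun x _ => huncurry (of (Function.curry x))

theorem jordan_block_size_one_of_unit_eigenvalue_general {d : ℕ} {I : Type} [Fintype I]
    (E : I → Matrix (Fin d) (Fin d) ℂ)
    (htni : ((1 : Matrix (Fin d) (Fin d) ℂ) - ∑ i, (E i)ᴴ * E i).PosSemidef)
    (M : Matrix (Fin d × Fin d) (Fin d × Fin d) ℂ)
    (hM : M = ∑ i, (E i) ⊗ₖ ((E i).map (starRingEnd ℂ)))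
    (lam : ℂ) (habs : ‖lam‖ = 1) :
    LinearMap.ker (((M - lam • (1 : Matrix (Fin d × Fin d) (Fin d × Fin d) ℂ)) ^ 2).mulVecLin)
      = LinearMap.ker ((M - lam • (1 : Matrix (Fin d × Fin d) (Fin d × Fin d) ℂ)).mulVecLin) := by
  obtain rfl : M = krausMatrix E := hM
  simpa only [← toLin'_apply', toLin'_pow, map_sub, map_smul, toLin'_one, ← Module.End.one_eq_id] using
    Module.End.ker_sq_sub_smul_eq_ker_of_boundedOrbits_eq_top
      (boundedOrbits_toLin'_krausMatrix_eq_top htni) habs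

/-- If the super-operator with Kraus operators `(E_i)` is trace-non-increasing
(`Σ_i E_iᴴ E_i ≼ I`) and `λ` is an eigenvalue of the matrix representation
`M = Σ_i E_i ⊗ conj(E_i)` with `|λ| = 1`, then every Jordan block of `M` for `λ` has size 1:
`ker((M − λI)²) = ker(M − λI)`. -/
theorem jordan_block_size_one_of_unit_eigenvalue {d : ℕ} {I : Type} [Fintype I]
    (E : I → Matrix (Fin d) (Fin d) ℂ)
    (htni : ((1 : Matrix (Fin d) (Fin d) ℂ) - ∑ i, (E i)ᴴ * E i).PosSemidef)
    (M : Matrix (Fin d × Fin d) (Fin d × Fin d) ℂ)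
    (hM : M = ∑ i, (E i) ⊗ₖ ((E i).map (starRingEnd ℂ)))
    (lam : ℂ) (hlam : lam ∈ spectrum ℂ M) (habs : ‖lam‖ = 1) :
    LinearMap.ker (((M - lam • (1 : Matrix (Fin d × Fin d) (Fin d × Fin d) ℂ)) ^ 2).mulVecLin)
      = LinearMap.ker ((M - lam • (1 : Matrix (Fin d × Fin d) (Fin d × Fin d) ℂ)).mulVecLin) :=
  jordan_block_size_one_of_unit_eigenvalue_general E htni M hM lam habs
end

section
/- Let E(σ) = Σ_{i∈I} E_i σ E_iᴴ be a super-operator on d×d complex matrices and let P be a projection (P = Pᴴ = P²) such that E fixes every state supported in P, i.e., E(η) = η for every positive semidefinite η with PηP = η. Then for every positive semidefinite matrix σ satisfying PσP ≼ σ in the Löwner order (in particular, for every positive semidefinite σ that commutes with P), one has P E(σ) P ≽ P σ P. -/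
open Matrix ComplexOrder

/-- The super-operator with Kraus operators `(E_i)`: `ρ ↦ Σ_i E_i ρ E_iᴴ`. -/
noncomputable def superOp {d : ℕ} {I : Type} [Fintype I]
    (E : I → Matrix (Fin d) (Fin d) ℂ) (ρ : Matrix (Fin d) (Fin d) ℂ) :
    Matrix (Fin d) (Fin d) ℂ :=
  ∑ i, E i * ρ * (E i)ᴴ

lemma superOp_posSemidef {d : ℕ} {I : Type} [Fintype I]
    (E : I → Matrix (Fin d) (Fin d) ℂ) {ρ : Matrix (Fin d) (Fin d) ℂ}
    (hρ : ρ.PosSemidef) : (superOp E ρ).PosSemidef := by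
  unfold superOp
  refine Finset.sum_induction _ _ (fun a b ha hb => ha.add hb) Matrix.PosSemidef.zero ?_
  intro i _
  exact hρ.mul_mul_conjTranspose_same (E i)

lemma superOp_add {d : ℕ} {I : Type} [Fintype I]
    (E : I → Matrix (Fin d) (Fin d) ℂ) (ρ τ : Matrix (Fin d) (Fin d) ℂ) :
    superOp E (ρ + τ) = superOp E ρ + superOp E τ := by
  unfold superOp
  rw [← Finset.sum_add_distrib]
  congr 1; ext i
  noncomm_ring

/-- If a super-operator `E` fixes every state supported in a projection `P`
(`E(η) = η` whenever `η ≥ 0` and `PηP = η`), then for every positive semidefinite `σ` with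
`PσP ≼ σ`, we have `P E(σ) P ≽ P σ P`. -/
theorem proj_superOp_proj_ge_of_fixes {d : ℕ} {I : Type} [Fintype I]
    (E : I → Matrix (Fin d) (Fin d) ℂ)
    (P : Matrix (Fin d) (Fin d) ℂ) (hP1 : P.IsHermitian) (hP2 : P * P = P)
    (hfix : ∀ η : Matrix (Fin d) (Fin d) ℂ, η.PosSemidef → P * η * P = η → superOp E η = η)
    (σ : Matrix (Fin d) (Fin d) ℂ) (hσ : σ.PosSemidef)
    (hle : (σ - P * σ * P).PosSemidef) :
    (P * superOp E σ * P - P * σ * P).PosSemidef := by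
  set τ := σ - P * σ * P with hτdef
  have hPσP : (P * σ * P).PosSemidef := by
    have := hσ.mul_mul_conjTranspose_same P
    rwa [hP1.eq] at this
  have hsupp : P * (P * σ * P) * P = P * σ * P := by
    rw [← mul_assoc, ← mul_assoc, hP2, mul_assoc, mul_assoc, hP2, ← mul_assoc]
  have hfixP : superOp E (P * σ * P) = P * σ * P := hfix _ hPσP hsupp
  have hsplit : σ = P * σ * P + τ := by simp [hτdef]
  have hEσ : superOp E σ = P * σ * P + superOp E τ := by
    conv_lhs => rw [hsplit]
    rw [superOp_add, hfixP]
  have hPEτP : (P * superOp E τ * P).PosSemidef := by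
    have := (superOp_posSemidef E hle).mul_mul_conjTranspose_same P
    rwa [hP1.eq] at this
  have : P * superOp E σ * P - P * σ * P = P * superOp E τ * P := by
    rw [hEσ]
    rw [mul_add, add_mul, hsupp]
    abel
  rwa [this]
end

section
/- Let E(ρ) = Σ_{i∈I} E_i ρ E_iᴴ be a super-operator on d×d complex matrices, with Schrödinger–Heisenberg dual E*(A) = Σ_{i∈I} E_iᴴ A E_i, and let P be a projection. Then for every positive semidefinite d×d matrix ρ: supp(E(ρ)) ⊆ range(P) if and only if supp(ρ) is contained in the orthogonal complement (with respect to the standard inner product on ℂ^d) of supp(E*(I − P)). -/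
/-!
Write `Q = 1 - P` and `σ = E*(Q)`. Both inclusions are vanishing conditions on products of
positive semidefinite matrices: `supp(E(ρ)) ⊆ range P` says `Q E(ρ) = 0`, and
`supp ρ ⊆ (supp σ)ᗮ = ker σ` says `σ ρ = 0`. A product of two positive semidefinite matrices
vanishes iff its trace does, and `tr(Q E(ρ)) = tr(E*(Q) ρ)` by cyclicity of the trace.
-/

open Matrix ComplexOrder

/-- The support of a matrix, viewed as a subspace of Euclidean space `ℂ^d`:
the range of the associated linear map. -/
noncomputable def msupp {d : ℕ} (ρ : Matrix (Fin d) (Fin d) ℂ) :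
    Submodule ℂ (EuclideanSpace ℂ (Fin d)) :=
  LinearMap.range (Matrix.toEuclideanLin ρ)

namespace Matrix

variable {𝕜 : Type*} [RCLike 𝕜] {l m n : Type*} [Fintype m] [Fintype n] [DecidableEq m]
  [DecidableEq n]

theorem range_toEuclideanLin_le_ker_iff (M : Matrix m n 𝕜) (N : Matrix l m 𝕜) :
    LinearMap.range (toEuclideanLin M) ≤ LinearMap.ker (toEuclideanLin N) ↔ N * M = 0 := by
  rw [LinearMap.range_le_ker_iff, ← toLpLin_mul_same, LinearEquiv.map_eq_zero_iff]

theorem IsHermitian.orthogonal_range_toEuclideanLin {A : Matrix n n 𝕜} (hA : A.IsHermitian) :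
    (LinearMap.range (toEuclideanLin A))ᗮ = LinearMap.ker (toEuclideanLin A) :=
  (isSymmetric_toEuclideanLin_iff.mpr hA).orthogonal_range

theorem IsIdempotentElem.range_toEuclideanLin {P : Matrix n n 𝕜} (hP : IsIdempotentElem P) :
    LinearMap.range (toEuclideanLin P) = LinearMap.ker (toEuclideanLin (1 - P)) := by
  have hP' : IsIdempotentElem (toEuclideanLin P) := hP.map (toLpLinAlgEquiv 2)
  rw [LinearMap.IsIdempotentElem.range_eq_ker hP', map_sub, toLpLin_one]

section MatrixOrder

open scoped MatrixOrder

theorem posSemidef_one_sub_of_isStarProjection {P : Matrix n n 𝕜} (hP : IsStarProjection P) :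
    (1 - P).PosSemidef :=
  nonneg_iff_posSemidef.mp hP.one_sub_nonneg

theorem PosSemidef.exists_eq_conjTranspose_mul_self {A : Matrix n n 𝕜} (hA : A.PosSemidef) :
    ∃ X : Matrix n n 𝕜, A = Xᴴ * X :=
  ⟨CFC.sqrt A, by
    rw [(nonneg_iff_posSemidef.mp (CFC.sqrt_nonneg A)).isHermitian.eq,
      CFC.sqrt_mul_sqrt_self A hA.nonneg]⟩

end MatrixOrder

theorem PosSemidef.trace_mul_eq_zero_iff {A B : Matrix n n 𝕜} (hA : A.PosSemidef)
    (hB : B.PosSemidef) : (A * B).trace = 0 ↔ A * B = 0 := by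
  refine ⟨fun h => ?_, fun h => by rw [h, trace_zero]⟩
  obtain ⟨X, rfl⟩ := hA.exists_eq_conjTranspose_mul_self
  obtain ⟨Y, rfl⟩ := hB.exists_eq_conjTranspose_mul_self
  -- `tr(Xᴴ X Yᴴ Y)` is the squared Frobenius norm of `X Yᴴ`.
  have hXY : X * Yᴴ = 0 := by
    rw [← trace_mul_conjTranspose_self_eq_zero_iff, conjTranspose_mul, conjTranspose_conjTranspose,
      ← h, show X * Yᴴ * (Y * Xᴴ) = X * (Yᴴ * Y) * Xᴴ by noncomm_ring, trace_mul_comm,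
      mul_assoc]
  calc Xᴴ * X * (Yᴴ * Y) = Xᴴ * (X * Yᴴ) * Y := by noncomm_ring
    _ = 0 := by rw [hXY, mul_zero, zero_mul]

end Matrix

noncomputable def dualOp {d : ℕ} {I : Type} [Fintype I] (E : I → Matrix (Fin d) (Fin d) ℂ)
    (A : Matrix (Fin d) (Fin d) ℂ) : Matrix (Fin d) (Fin d) ℂ :=
  ∑ i, (E i)ᴴ * A * E i

section SuperOp

variable {d : ℕ} {I : Type} [Fintype I] (E : I → Matrix (Fin d) (Fin d) ℂ)

theorem Matrix.PosSemidef.superOp {ρ : Matrix (Fin d) (Fin d) ℂ} (hρ : ρ.PosSemidef) :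
    (superOp E ρ).PosSemidef :=
  posSemidef_sum _ fun i _ => hρ.mul_mul_conjTranspose_same (E i)

theorem Matrix.PosSemidef.dualOp {A : Matrix (Fin d) (Fin d) ℂ} (hA : A.PosSemidef) :
    (dualOp E A).PosSemidef :=
  posSemidef_sum _ fun i _ => hA.conjTranspose_mul_mul_same (E i)

theorem trace_mul_superOp (A ρ : Matrix (Fin d) (Fin d) ℂ) :
    (A * superOp E ρ).trace = (dualOp E A * ρ).trace := by
  simp only [superOp, dualOp, Finset.mul_sum, Finset.sum_mul, trace_sum]
  refine Finset.sum_congr rfl fun i _ => ?_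
  rw [← mul_assoc, ← mul_assoc, trace_mul_comm, ← mul_assoc, ← mul_assoc]

end SuperOp

/-- For a super-operator `E` with dual `E*(A) = Σ_i E_iᴴ A E_i` and a projection
`P`, for every positive semidefinite `ρ`:
`supp(E(ρ)) ⊆ range(P)` iff `supp(ρ) ⊆ (supp(E*(I − P)))ᗮ`. -/
theorem supp_superOp_le_range_iff {d : ℕ} {I : Type} [Fintype I]
    (E : I → Matrix (Fin d) (Fin d) ℂ)
    (P : Matrix (Fin d) (Fin d) ℂ) (hP1 : P.IsHermitian) (hP2 : P * P = P)
    (ρ : Matrix (Fin d) (Fin d) ℂ) (hρ : ρ.PosSemidef) :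
    msupp (superOp E ρ) ≤ LinearMap.range (Matrix.toEuclideanLin P) ↔
      msupp ρ ≤ (msupp (∑ i, (E i)ᴴ * ((1 : Matrix (Fin d) (Fin d) ℂ) - P) * E i))ᗮ := by
  have hQ : (1 - P).PosSemidef := posSemidef_one_sub_of_isStarProjection ⟨hP2, hP1⟩
  have hσ : (dualOp E (1 - P)).PosSemidef := hQ.dualOp E
  change _ ≤ _ ↔ msupp ρ ≤ (msupp (dualOp E (1 - P)))ᗮ
  rw [IsIdempotentElem.range_toEuclideanLin hP2, msupp, msupp, msupp,
    hσ.isHermitian.orthogonal_range_toEuclideanLin, range_toEuclideanLin_le_ker_iff,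
    range_toEuclideanLin_le_ker_iff, ← hQ.trace_mul_eq_zero_iff (hρ.superOp E),
    ← hσ.trace_mul_eq_zero_iff hρ, trace_mul_superOp]
end

section
/- Let E(ρ) = Σ_{i∈I} E_i ρ E_iᴴ be a super-operator on d×d complex matrices. For every positive semidefinite d×d matrix ρ, supp(E(ρ)) = ⨆_{i∈I} E_i(supp(ρ)), the linear span of all vectors E_i v with i ∈ I and v ∈ supp(ρ). In particular, the induced action on subspaces V ↦ supp(E(P_V)) (P_V the orthogonal projection onto V) distributes over joins: supp(E(P_{V⊔W})) = supp(E(P_V)) ⊔ supp(E(P_W)) for all subspaces V, W ≤ ℂ^d. -/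
open Matrix ComplexOrder

/-- The matrix of the orthogonal projection onto a subspace `V` of `ℂ^d`. -/
noncomputable def projMatrix {d : ℕ} (V : Submodule ℂ (EuclideanSpace ℂ (Fin d))) :
    Matrix (Fin d) (Fin d) ℂ :=
  Matrix.toEuclideanLin.symm ((V.subtypeL.comp (Submodule.orthogonalProjection V)).toLinearMap)

/-!
Writing `ρ = Bᴴ B`, each Kraus term is `(E_i Bᴴ)(E_i Bᴴ)ᴴ`, and `range (M Mᴴ) = range M` shows
that its range is `E_i (range Bᴴ) = E_i (supp ρ)`. For a sum of positive semidefinite matrices,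
`x* (Σ A_i) x = 0` forces every `A_i x = 0`, so the kernel of the sum is the intersection of the
kernels; taking orthogonal complements, the range of the sum is the join of the ranges. The
statement about projections follows from `supp P_V = V` and `E_i (V ⊔ W) = E_i V ⊔ E_i W`.
-/

namespace Matrix

variable {𝕜 : Type*} [RCLike 𝕜] {n : Type*} [Fintype n]

lemma PosSemidef.sum_mulVec_eq_zero_iff {ι : Type*} [Fintype ι] {A : ι → Matrix n n 𝕜}
    (hA : ∀ i, (A i).PosSemidef) (x : n → 𝕜) :
    (∑ i, A i) *ᵥ x = 0 ↔ ∀ i, A i *ᵥ x = 0 := by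
  refine ⟨fun h i => ?_, fun h => by simp [sum_mulVec, h]⟩
  have hquad : ∑ j, star x ⬝ᵥ A j *ᵥ x = 0 := by
    rw [← dotProduct_sum, ← sum_mulVec, h, dotProduct_zero]
  rw [Finset.sum_eq_zero_iff_of_nonneg fun j _ => (hA j).dotProduct_mulVec_nonneg x] at hquad
  exact ((hA i).dotProduct_mulVec_zero_iff x).mp (hquad i (Finset.mem_univ i))

variable [DecidableEq n] {m : Type*} [Fintype m] [DecidableEq m]

lemma range_toEuclideanLin_mul_conjTranspose_self (M : Matrix m n 𝕜) :
    LinearMap.range (toEuclideanLin (M * Mᴴ)) = LinearMap.range (toEuclideanLin M) := by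
  rw [toLpLin_mul_same, toEuclideanLin_conjTranspose_eq_adjoint,
    LinearMap.range_self_comp_adjoint]

open scoped MatrixOrder in
lemma PosSemidef.range_toEuclideanLin_mul_mul_conjTranspose {ρ : Matrix n n 𝕜}
    (hρ : ρ.PosSemidef) (F : Matrix m n 𝕜) :
    LinearMap.range (toEuclideanLin (F * ρ * Fᴴ))
      = (LinearMap.range (toEuclideanLin ρ)).map (toEuclideanLin F) := by
  obtain ⟨B, rfl⟩ : ∃ B : Matrix n n 𝕜, ρ = Bᴴ * B :=
    CStarAlgebra.nonneg_iff_eq_star_mul_self.mp hρ.nonneg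
  have hB : Bᴴ * B = Bᴴ * Bᴴᴴ := by rw [conjTranspose_conjTranspose]
  rw [show F * (Bᴴ * B) * Fᴴ = F * Bᴴ * (F * Bᴴ)ᴴ by simp [Matrix.mul_assoc],
    range_toEuclideanLin_mul_conjTranspose_self, toLpLin_mul_same, LinearMap.range_comp, hB,
    range_toEuclideanLin_mul_conjTranspose_self]

lemma IsHermitian.ker_toEuclideanLin_eq_orthogonal_range {A : Matrix n n 𝕜}
    (hA : A.IsHermitian) :
    LinearMap.ker (toEuclideanLin A) = (LinearMap.range (toEuclideanLin A))ᗮ := by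
  rw [LinearMap.orthogonal_range, ← toEuclideanLin_conjTranspose_eq_adjoint, hA.eq]

lemma PosSemidef.range_toEuclideanLin_sum {ι : Type*} [Fintype ι] {A : ι → Matrix n n 𝕜}
    (hA : ∀ i, (A i).PosSemidef) :
    LinearMap.range (toEuclideanLin (∑ i, A i))
      = ⨆ i, LinearMap.range (toEuclideanLin (A i)) := by
  have hker : LinearMap.ker (toEuclideanLin (∑ i, A i))
      = ⨅ i, LinearMap.ker (toEuclideanLin (A i)) := by
    ext x
    simp only [LinearMap.mem_ker, Submodule.mem_iInf, toLpLin_apply, WithLp.toLp_eq_zero,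
      sum_mulVec_eq_zero_iff hA]
  have hsum : (∑ i, A i).IsHermitian := (posSemidef_sum Finset.univ fun i _ => hA i).isHermitian
  rw [← Submodule.orthogonal_orthogonal (LinearMap.range _),
    ← hsum.ker_toEuclideanLin_eq_orthogonal_range, hker,
    ← Submodule.orthogonal_orthogonal (⨆ i, _), ← Submodule.iInf_orthogonal]
  simp_rw [(hA _).isHermitian.ker_toEuclideanLin_eq_orthogonal_range]

end Matrix

section

variable {d : ℕ}

lemma toEuclideanLin_projMatrix (V : Submodule ℂ (EuclideanSpace ℂ (Fin d))) :
    toEuclideanLin (projMatrix V) = V.starProjection.toLinearMap :=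
  toEuclideanLin.apply_symm_apply _

lemma msupp_projMatrix (V : Submodule ℂ (EuclideanSpace ℂ (Fin d))) :
    msupp (projMatrix V) = V := by
  rw [msupp, toEuclideanLin_projMatrix]
  exact V.range_starProjection

lemma posSemidef_projMatrix (V : Submodule ℂ (EuclideanSpace ℂ (Fin d))) :
    (projMatrix V).PosSemidef := by
  rw [← isPositive_toEuclideanLin_iff, toEuclideanLin_projMatrix]
  exact (ContinuousLinearMap.IsPositive.of_isStarProjection
    isStarProjection_starProjection).toLinearMap

lemma msupp_superOp {I : Type} [Fintype I] (E : I → Matrix (Fin d) (Fin d) ℂ)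
    {ρ : Matrix (Fin d) (Fin d) ℂ} (hρ : ρ.PosSemidef) :
    msupp (superOp E ρ) = ⨆ i, (msupp ρ).map (toEuclideanLin (E i)) := by
  simp only [msupp, superOp,
    PosSemidef.range_toEuclideanLin_sum fun i => hρ.mul_mul_conjTranspose_same (E i),
    hρ.range_toEuclideanLin_mul_mul_conjTranspose]

end

/-- `supp(E(ρ)) = ⨆_i E_i(supp ρ)` for every positive semidefinite `ρ`; in
particular, the induced action on subspaces `V ↦ supp(E(P_V))` distributes over joins. -/
theorem supp_superOp_eq_iSup_map {d : ℕ} {I : Type} [Fintype I]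
    (E : I → Matrix (Fin d) (Fin d) ℂ) :
    (∀ ρ : Matrix (Fin d) (Fin d) ℂ, ρ.PosSemidef →
      msupp (superOp E ρ) = ⨆ i, (msupp ρ).map (Matrix.toEuclideanLin (E i))) ∧
    (∀ V W : Submodule ℂ (EuclideanSpace ℂ (Fin d)),
      msupp (superOp E (projMatrix (V ⊔ W)))
        = msupp (superOp E (projMatrix V)) ⊔ msupp (superOp E (projMatrix W))) := by
  refine ⟨fun ρ hρ => msupp_superOp E hρ, fun V W => ?_⟩
  simp only [msupp_superOp E (posSemidef_projMatrix _), msupp_projMatrix, Submodule.map_sup]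
  exact iSup_sup_eq
end

section
/- Let Act be a finite set with |Act| ≥ 2 and for each α ∈ Act let E_α be a trace-preserving super-operator on d×d complex matrices. Let E = (1/|Act|) Σ_{α∈Act} E_α, let P be a projection, and let σ₀ be a density matrix. Then the following are equivalent: (i) for every k ≥ 0 and every word α₁⋯α_k ∈ Act^k, supp(E_{α_k} ∘ ⋯ ∘ E_{α_1}(σ₀)) ⊆ range(P); (ii) supp(E^k(σ₀)) ⊆ range(P) for every 0 ≤ k ≤ d − 1. -/
open Matrix ComplexOrder

/-!
For positive semidefinite `ρ = B Bᴴ` one has `Σᵢ Fᵢ ρ Fᵢᴴ = M Mᴴ` with `M` the block row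
`[F₁B ⋯ FₘB]`, so `supp (Σᵢ Fᵢ ρ Fᵢᴴ) = Σᵢ Fᵢ (supp ρ)`: supports evolve under the subspace maps
`Φ_α S = Σᵢ E_{α,i} S` and, for the average, `Φ = Σ_α Φ_α`. These are left adjoints (of
`T ↦ ⋂ᵢ E_{α,i}⁻¹ T`), so they preserve all joins. Then "every word maps `supp σ₀` into `range P`"
and "every `Φᵏ (supp σ₀)` lies in `range P`" both say that the least subspace containing `supp σ₀`
and invariant under every `Φ_α`, equivalently under `Φ`, lies in `range P`. Finally the partial
joins `Σ_{j ≤ k} Φʲ (supp σ₀)` grow strictly until they stall, and a stalled partial join is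
`Φ`-invariant; in `ℂᵈ` this happens by `k = d - 1`.
-/

section Lattice

variable {L A : Type*}

theorem Monotone.iterate_le_of_le_of_map_le [Preorder L] {Φ : L → L} (hΦ : Monotone Φ)
    {x t : L} (hx : x ≤ t) (ht : Φ t ≤ t) (k : ℕ) : Φ^[k] x ≤ t := by
  induction k with
  | zero => exact hx
  | succ k ih => exact (Function.iterate_succ_apply' Φ k x).trans_le ((hΦ ih).trans ht)

theorem List.foldl_le_of_le_of_map_le [Preorder L] {f : A → L → L} (hf : ∀ a, Monotone (f a))
    {t : L} (ht : ∀ a, f a t ≤ t) (w : List A) {x : L} (hx : x ≤ t) :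
    w.foldl (fun y a => f a y) x ≤ t := by
  induction w generalizing x with
  | nil => exact hx
  | cons a w ih => exact ih ((hf a hx).trans (ht a))

variable [CompleteLattice L] {f g : A → L → L}

theorem GaloisConnection.iSup_iInf (gc : ∀ a, GaloisConnection (f a) (g a)) :
    GaloisConnection (fun x => ⨆ a, f a x) (fun y => ⨅ a, g a y) := fun x y => by
  simp only [iSup_le_iff, le_iInf_iff, (gc _).le_iff_le]

theorem GaloisConnection.foldl_le_iff_iterate_le (gc : ∀ a, GaloisConnection (f a) (g a))
    {x q : L} :
    (∀ w : List A, w.foldl (fun y a => f a y) x ≤ q) ↔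
      ∀ k, (fun y => ⨆ a, f a y)^[k] x ≤ q := by
  have gcΦ := GaloisConnection.iSup_iInf gc
  constructor
  · intro h k
    have hR : ∀ a, f a (⨆ w : List A, w.foldl (fun y a => f a y) x) ≤
        ⨆ w : List A, w.foldl (fun y a => f a y) x := fun a => by
      rw [(gc a).l_iSup]
      exact iSup_le fun w => le_iSup_of_le (w ++ [a]) (by simp)
    exact (gcΦ.monotone_l.iterate_le_of_le_of_map_le (le_iSup_of_le [] le_rfl)
      (iSup_le hR) k).trans (iSup_le h)
  · intro h w
    have hT : (⨆ a, f a (⨆ k, (fun y => ⨆ a, f a y)^[k] x)) ≤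
        ⨆ k, (fun y => ⨆ a, f a y)^[k] x := by
      rw [gcΦ.l_iSup]
      exact iSup_le fun k =>
        le_iSup_of_le (k + 1) (Function.iterate_succ_apply' (fun y => ⨆ a, f a y) k x).ge
    exact (List.foldl_le_of_le_of_map_le (fun a => (gc a).monotone_l)
      (fun a => (le_iSup (f · _) a).trans hT) w (le_iSup_of_le 0 le_rfl)).trans (iSup_le h)

end Lattice

section FiniteDimensional

variable {K V : Type*} [DivisionRing K] [AddCommGroup V] [Module K V] [FiniteDimensional K V]

open Module in
theorem Submodule.exists_le_finrank_sub_one_eq_succ {T : ℕ → Submodule K V} (hT : Monotone T)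
    (h0 : T 0 ≠ ⊥) : ∃ m ≤ finrank K V - 1, T m = T (m + 1) := by
  by_contra! hne
  have grow : ∀ m ≤ finrank K V, m + 1 ≤ finrank K (T m) := by
    intro m
    induction m with
    | zero => exact fun _ => Submodule.one_le_finrank_iff.mpr h0
    | succ m ih =>
      intro hm
      have hlt : T m < T (m + 1) := (hT m.le_succ).lt_of_ne (hne m (by omega))
      have := Submodule.finrank_lt_finrank_of_lt hlt
      have := ih (by omega)
      omega
  have := grow _ le_rfl
  have := Submodule.finrank_le (T (finrank K V))
  omega

open Module in
theorem GaloisConnection.iterate_le_iSup_iterate_le_finrank_sub_one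
    {Φ Ψ : Submodule K V → Submodule K V} (gc : GaloisConnection Φ Ψ) (x : Submodule K V)
    (k : ℕ) : Φ^[k] x ≤ ⨆ j ≤ finrank K V - 1, Φ^[j] x := by
  rcases eq_or_ne x ⊥ with rfl | hx
  · exact (Function.iterate_fixed gc.l_bot k).trans_le bot_le
  set T := partialSups fun j => Φ^[j] x
  obtain ⟨m, hm, hstall⟩ := Submodule.exists_le_finrank_sub_one_eq_succ T.monotone
    (by simpa [T] using hx)
  have hinv : Φ (T m) ≤ T m := by
    conv_rhs => rw [hstall]
    rw [partialSups_eq_biSup, partialSups_eq_biSup, gc.l_iSup₂]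
    exact iSup₂_le fun j hj =>
      le_iSup₂_of_le (j + 1) (by omega) (Function.iterate_succ_apply' Φ j x).ge
  refine (gc.monotone_l.iterate_le_of_le_of_map_le (le_partialSups_of_le _ m.zero_le) hinv
    k).trans ?_
  rw [partialSups_eq_biSup]
  exact biSup_mono fun j hj => hj.trans hm

open Module in
theorem GaloisConnection.iterate_le_iff_iterate_le_finrank_sub_one
    {Φ Ψ : Submodule K V → Submodule K V} (gc : GaloisConnection Φ Ψ) {x q : Submodule K V} :
    (∀ k, Φ^[k] x ≤ q) ↔ ∀ k ≤ finrank K V - 1, Φ^[k] x ≤ q :=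
  ⟨fun h k _ => h k, fun h k =>
    (gc.iterate_le_iSup_iterate_le_finrank_sub_one x k).trans (iSup₂_le h)⟩

end FiniteDimensional

section Matrix

variable {m n ι R : Type*} [Fintype n]

-- `Matrix.of fun r p => N p.1 r p.2` is the block row `[N i₁ ⋯ N iₖ]`.
theorem Matrix.range_mulVecLin_of_prod [CommSemiring R] [Fintype ι] (N : ι → Matrix m n R) :
    LinearMap.range (Matrix.of fun r (p : ι × n) => N p.1 r p.2).mulVecLin =
      ⨆ i, LinearMap.range (N i).mulVecLin := by
  simp only [Matrix.range_mulVecLin, ← Submodule.span_iUnion]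
  congr 1
  ext v
  simp only [Matrix.col, Set.mem_iUnion]
  exact ⟨fun ⟨⟨i, c⟩, h⟩ => ⟨i, c, h⟩, fun ⟨i, c, h⟩ => ⟨(i, c), h⟩⟩

theorem Matrix.range_mulVecLin_smul {K : Type*} [Field K] {c : K} (hc : c ≠ 0)
    (M : Matrix m n K) : LinearMap.range (c • M).mulVecLin = LinearMap.range M.mulVecLin := by
  classical
  rw [← Matrix.toLin'_apply', map_smul, LinearMap.range_smul _ _ hc, Matrix.toLin'_apply']

theorem Matrix.of_prod_mul_conjTranspose [Fintype ι] [Semiring R] [StarRing R]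
    (N : ι → Matrix m n R) :
    (Matrix.of fun r (p : ι × n) => N p.1 r p.2) * (Matrix.of fun r (p : ι × n) => N p.1 r p.2)ᴴ =
      ∑ i, N i * (N i)ᴴ := by
  ext r s
  simp [Matrix.mul_apply, Matrix.sum_apply, Fintype.sum_prod_type]

theorem Matrix.range_mulVecLin_mul_conjTranspose_self {𝕜 : Type*} [RCLike 𝕜] [Fintype m]
    (M : Matrix m n 𝕜) :
    LinearMap.range (M * Mᴴ).mulVecLin = LinearMap.range M.mulVecLin := by
  refine Submodule.eq_of_le_of_finrank_eq ?_ (M.rank_self_mul_conjTranspose)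
  rw [Matrix.mulVecLin_mul]
  exact LinearMap.range_comp_le_range _ _

open scoped MatrixOrder in
theorem Matrix.PosSemidef.exists_eq_mul_conjTranspose {𝕜 : Type*} [RCLike 𝕜] [DecidableEq n]
    {ρ : Matrix n n 𝕜} (hρ : ρ.PosSemidef) : ∃ B : Matrix n n 𝕜, ρ = B * Bᴴ :=
  CStarAlgebra.nonneg_iff_eq_mul_star_self.mp hρ.nonneg

end Matrix

section SuperOp

variable {d : ℕ} {I : Type} [Fintype I]

theorem posSemidef_superOp (F : I → Matrix (Fin d) (Fin d) ℂ) {ρ : Matrix (Fin d) (Fin d) ℂ}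
    (hρ : ρ.PosSemidef) : (superOp F ρ).PosSemidef :=
  posSemidef_sum _ fun i _ => hρ.mul_mul_conjTranspose_same (F i)

theorem range_superOp (F : I → Matrix (Fin d) (Fin d) ℂ) {ρ : Matrix (Fin d) (Fin d) ℂ}
    (hρ : ρ.PosSemidef) :
    LinearMap.range (superOp F ρ).mulVecLin =
      ⨆ i, (LinearMap.range ρ.mulVecLin).map (F i).mulVecLin := by
  obtain ⟨B, rfl⟩ := hρ.exists_eq_mul_conjTranspose
  have hsum : superOp F (B * Bᴴ) = ∑ i, (F i * B) * (F i * B)ᴴ := by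
    simp only [superOp, Matrix.conjTranspose_mul, Matrix.mul_assoc]
  rw [hsum, ← Matrix.of_prod_mul_conjTranspose, Matrix.range_mulVecLin_mul_conjTranspose_self,
    Matrix.range_mulVecLin_of_prod (fun i => F i * B),
    Matrix.range_mulVecLin_mul_conjTranspose_self]
  simp only [Matrix.mulVecLin_mul, LinearMap.range_comp]

end SuperOp

section Average

variable {d : ℕ} {Act : Type} {I : Act → Type} [∀ α, Fintype (I α)]
  (E : (α : Act) → I α → Matrix (Fin d) (Fin d) ℂ)

theorem range_foldl_superOp {ρ : Matrix (Fin d) (Fin d) ℂ} (hρ : ρ.PosSemidef) (w : List Act) :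
    LinearMap.range (w.foldl (fun ρ α => superOp (E α) ρ) ρ).mulVecLin =
      w.foldl (fun S α => ⨆ i, S.map (E α i).mulVecLin) (LinearMap.range ρ.mulVecLin) := by
  induction w generalizing ρ with
  | nil => rfl
  | cons α w ih =>
    rw [List.foldl_cons, List.foldl_cons, ih (posSemidef_superOp (E α) hρ), range_superOp _ hρ]

variable [Fintype Act]

theorem sum_superOp_eq_superOp_sigma (ρ : Matrix (Fin d) (Fin d) ℂ) :
    ∑ α, superOp (E α) ρ = superOp (fun p : (α : Act) × I α => E p.1 p.2) ρ :=
  (Fintype.sum_sigma fun p : (α : Act) × I α => E p.1 p.2 * ρ * (E p.1 p.2)ᴴ).symm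

theorem posSemidef_average {ρ : Matrix (Fin d) (Fin d) ℂ} (hρ : ρ.PosSemidef) :
    ((Fintype.card Act : ℂ)⁻¹ • ∑ α, superOp (E α) ρ).PosSemidef :=
  (posSemidef_sum _ fun α _ => posSemidef_superOp (E α) hρ).smul
    (inv_nonneg.mpr (Nat.cast_nonneg _))

theorem range_average [Nonempty Act] {ρ : Matrix (Fin d) (Fin d) ℂ} (hρ : ρ.PosSemidef) :
    LinearMap.range ((Fintype.card Act : ℂ)⁻¹ • ∑ α, superOp (E α) ρ).mulVecLin =
      ⨆ α, ⨆ i, (LinearMap.range ρ.mulVecLin).map (E α i).mulVecLin := by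
  rw [Matrix.range_mulVecLin_smul (by simp), sum_superOp_eq_superOp_sigma,
    range_superOp _ hρ, iSup_sigma]

theorem range_iterate_average [Nonempty Act] {ρ : Matrix (Fin d) (Fin d) ℂ} (hρ : ρ.PosSemidef)
    (k : ℕ) :
    LinearMap.range
        ((fun ρ => (Fintype.card Act : ℂ)⁻¹ • ∑ α, superOp (E α) ρ)^[k] ρ).mulVecLin =
      (fun S => ⨆ α, ⨆ i, S.map (E α i).mulVecLin)^[k] (LinearMap.range ρ.mulVecLin) := by
  induction k generalizing ρ with
  | zero => rfl
  | succ k ih =>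
    rw [Function.iterate_succ_apply, Function.iterate_succ_apply, ih (posSemidef_average E hρ),
      range_average E hρ]

end Average

theorem invariance_iff_average_iterates_general {d : ℕ} {Act : Type} [Fintype Act]
    (hcard : 2 ≤ Fintype.card Act)
    {I : Act → Type} [∀ α, Fintype (I α)]
    (E : (α : Act) → I α → Matrix (Fin d) (Fin d) ℂ)
    (P : Matrix (Fin d) (Fin d) ℂ)
    (σ₀ : Matrix (Fin d) (Fin d) ℂ) (hσ₀ : σ₀.PosSemidef) :
    (∀ w : List Act,
        LinearMap.range (w.foldl (fun ρ α => superOp (E α) ρ) σ₀).mulVecLin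
          ≤ LinearMap.range P.mulVecLin) ↔
      (∀ k, k ≤ d - 1 →
        LinearMap.range
            ((fun ρ => (Fintype.card Act : ℂ)⁻¹ • ∑ α, superOp (E α) ρ)^[k] σ₀).mulVecLin
          ≤ LinearMap.range P.mulVecLin) := by
  have : Nonempty Act := Fintype.card_pos_iff.mp (by omega)
  have gc : ∀ α, GaloisConnection
      (fun S : Submodule ℂ (Fin d → ℂ) => ⨆ i, S.map (E α i).mulVecLin)
      (fun T : Submodule ℂ (Fin d → ℂ) => ⨅ i, T.comap (E α i).mulVecLin) :=
    fun α => GaloisConnection.iSup_iInf fun i => Submodule.gc_map_comap _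
  simp only [range_foldl_superOp E hσ₀, range_iterate_average E hσ₀]
  rw [GaloisConnection.foldl_le_iff_iterate_le gc,
    (GaloisConnection.iSup_iInf gc).iterate_le_iff_iterate_le_finrank_sub_one,
    Module.finrank_fin_fun]

/-- For a finite family (|Act| ≥ 2) of trace-preserving super-operators `E_α`
and their uniform average `E`, a projection `P` and a density matrix `σ₀`:
all states reachable by words over `Act` are supported in `range P` iff
`supp(E^k(σ₀)) ⊆ range P` for all `0 ≤ k ≤ d − 1`. -/
theorem invariance_iff_average_iterates {d : ℕ} {Act : Type} [Fintype Act]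
    (hcard : 2 ≤ Fintype.card Act)
    {I : Act → Type} [∀ α, Fintype (I α)]
    (E : (α : Act) → I α → Matrix (Fin d) (Fin d) ℂ)
    (htp : ∀ α, ∑ i, (E α i)ᴴ * E α i = (1 : Matrix (Fin d) (Fin d) ℂ))
    (P : Matrix (Fin d) (Fin d) ℂ) (hP1 : P.IsHermitian) (hP2 : P * P = P)
    (σ₀ : Matrix (Fin d) (Fin d) ℂ) (hσ₀ : σ₀.PosSemidef) (htr : σ₀.trace = 1) :
    (∀ w : List Act,
        LinearMap.range (w.foldl (fun ρ α => superOp (E α) ρ) σ₀).mulVecLin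
          ≤ LinearMap.range P.mulVecLin) ↔
      (∀ k, k ≤ d - 1 →
        LinearMap.range
            ((fun ρ => (Fintype.card Act : ℂ)⁻¹ • ∑ α, superOp (E α) ρ)^[k] σ₀).mulVecLin
          ≤ LinearMap.range P.mulVecLin) :=
  invariance_iff_average_iterates_general hcard E P σ₀ hσ₀
end

section
/- Let Act be a finite set and for each α ∈ Act let E_α be a trace-preserving super-operator on d×d complex matrices with Kraus operators (E_{α,i})_{i∈I_α}. For every set r ⊆ ℂ^d that is a finite union of subspaces, there exists a set x ⊆ r, itself a finite union of subspaces, such that ⋃_{α∈Act} E_α⟨x⟩ = x, and for every finite union of subspaces x' ⊆ r with ⋃_{α∈Act} E_α⟨x'⟩ = x' one has x' ⊆ x (the maximal invariant of r). -/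
/-!
Finite unions of subspaces of `ℂ^d` satisfy the descending chain condition: a proper inclusion
`Y ⊂ X` replaces some components of `X` by strictly smaller subspaces, so the multiset of
components decreases in the (well-founded) Dershowitz–Manna order. Hence among the finite unions
`X ⊆ r` that contain every invariant finite union inside `r` there is a minimal one, `x`. Its
stable core (the union of the subspaces of `x` that every `E_α` maps into `x`) is again such a
set, so by minimality it is all of `x`, which gives `⋃_α E_α⟨x⟩ ⊆ x`; then `⋃_α E_α⟨x⟩` is such
a set too, and minimality gives equality.
-/

open Matrix ComplexOrder

/-- `E⟨V⟩ := ⨆_i E_i(V)`, the span of all `E_i v` with `v ∈ V`. -/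
noncomputable def supSpan {d : ℕ} {I : Type} [Fintype I]
    (E : I → Matrix (Fin d) (Fin d) ℂ) (V : Submodule ℂ (Fin d → ℂ)) :
    Submodule ℂ (Fin d → ℂ) :=
  ⨆ i, V.map (E i).mulVecLin

/-- `E⟨X⟩` for an arbitrary set `X`: the union of `E⟨V⟩` over all subspaces `V ⊆ X`. -/
noncomputable def applySet {d : ℕ} {I : Type} [Fintype I]
    (E : I → Matrix (Fin d) (Fin d) ℂ) (X : Set (Fin d → ℂ)) : Set (Fin d → ℂ) :=
  ⋃ V ∈ {V : Submodule ℂ (Fin d → ℂ) | (V : Set (Fin d → ℂ)) ⊆ X},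
    ((supSpan E V : Submodule ℂ (Fin d → ℂ)) : Set (Fin d → ℂ))

/-- A set is a finite union of linear subspaces. -/
def IsFinUnionSubspaces {d : ℕ} (X : Set (Fin d → ℂ)) : Prop :=
  ∃ (m : ℕ) (V : Fin m → Submodule ℂ (Fin d → ℂ)), X = ⋃ i, (V i : Set (Fin d → ℂ))

section MaximalSubspaces

variable {K M : Type*} [Field K] [AddCommGroup M] [Module K M]

theorem Submodule.exists_le_of_coe_subset_iUnion [Infinite K] {ι : Type*} [Finite ι]
    (p : ι → Submodule K M) {V : Submodule K M} (hV : (V : Set M) ⊆ ⋃ i, (p i : Set M)) :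
    ∃ i, V ≤ p i := by
  by_contra! hne
  obtain ⟨x, hx⟩ := Submodule.exists_forall_notMem_of_forall_ne_top
    (fun i => (p i).comap V.subtype) fun i => by
      rw [Ne, Submodule.comap_subtype_eq_top]; exact hne i
  obtain ⟨i, hi⟩ := Set.mem_iUnion.mp (hV x.2)
  exact hx i hi

variable (K) in
/-- For a finite union of subspaces these are its irredundant components. -/
def maximalSubspaces (X : Set M) : Set (Submodule K M) :=
  {V | Maximal (fun W : Submodule K M => (W : Set M) ⊆ X) V}

theorem coe_subset_of_mem_maximalSubspaces {X : Set M} {V : Submodule K M}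
    (hV : V ∈ maximalSubspaces K X) : (V : Set M) ⊆ X :=
  hV.1

theorem eq_of_mem_maximalSubspaces {X : Set M} {V W : Submodule K M}
    (hV : V ∈ maximalSubspaces K X) (hW : (W : Set M) ⊆ X) (hVW : V ≤ W) : V = W :=
  le_antisymm hVW (hV.2 hW hVW)

theorem exists_mem_maximalSubspaces_le [WellFoundedGT (Submodule K M)] {X : Set M}
    {V : Submodule K M} (hV : (V : Set M) ⊆ X) : ∃ W ∈ maximalSubspaces K X, V ≤ W := by
  obtain ⟨W, hVW, hW⟩ :=
    exists_maximal_ge_of_wellFoundedGT (fun W : Submodule K M => (W : Set M) ⊆ X) V hV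
  exact ⟨W, hW, hVW⟩

theorem maximalSubspaces_iUnion_subset_range [Infinite K] {ι : Type*} [Finite ι]
    (p : ι → Submodule K M) : maximalSubspaces K (⋃ i, (p i : Set M)) ⊆ Set.range p := by
  intro W hW
  obtain ⟨i, hi⟩ :=
    Submodule.exists_le_of_coe_subset_iUnion p (coe_subset_of_mem_maximalSubspaces hW)
  exact ⟨i, (eq_of_mem_maximalSubspaces hW (Set.subset_iUnion (fun i => (p i : Set M)) i) hi).symm⟩

theorem iUnion_subset_biUnion_maximalSubspaces [WellFoundedGT (Submodule K M)] {ι : Type*}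
    (p : ι → Submodule K M) :
    ⋃ i, (p i : Set M) ⊆ ⋃ W ∈ maximalSubspaces K (⋃ i, (p i : Set M)), (W : Set M) := by
  refine Set.iUnion_subset fun i => ?_
  obtain ⟨W, hW, hiW⟩ :=
    exists_mem_maximalSubspaces_le (Set.subset_iUnion (fun i => (p i : Set M)) i)
  exact (SetLike.coe_subset_coe.mpr hiW).trans (Set.subset_biUnion_of_mem hW)

theorem isDershowitzMannaLT_of_ssubset [WellFoundedGT (Submodule K M)] {X Y : Set M}
    {S T : Finset (Submodule K M)} (hS : ↑S = maximalSubspaces K Y)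
    (hT : ↑T = maximalSubspaces K X) (hX : X ⊆ ⋃ W ∈ maximalSubspaces K X, (W : Set M))
    (hYX : Y ⊂ X) :
    Multiset.IsDershowitzMannaLT S.val T.val := by
  classical
  have hST : S.filter (· ∈ T) = T.filter (· ∈ S) := by
    rw [Finset.filter_mem_eq_inter, Finset.filter_mem_eq_inter, Finset.inter_comm]
  refine ⟨(S.filter (· ∈ T)).val, (S.filter (· ∉ T)).val, (T.filter (· ∉ S)).val,
    ?_, ?_, ?_, ?_⟩
  · intro hempty
    rw [Multiset.empty_eq_zero, Finset.val_eq_zero, Finset.filter_eq_empty_iff] at hempty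
    refine hYX.not_subset (hX.trans (Set.iUnion₂_subset fun W hW => ?_))
    have hWS : W ∈ (S : Set (Submodule K M)) :=
      not_not.mp (hempty (by rw [← Finset.mem_coe, hT]; exact hW))
    rw [hS] at hWS
    exact coe_subset_of_mem_maximalSubspaces hWS
  · rw [Finset.filter_val, Finset.filter_val, Multiset.filter_add_not]
  · rw [hST, Finset.filter_val, Finset.filter_val, Multiset.filter_add_not]
  · intro V hV
    obtain ⟨hVS, hVT⟩ := Finset.mem_filter.mp hV
    have hVY : V ∈ maximalSubspaces K Y := hS ▸ hVS
    obtain ⟨W, hWX, hVW⟩ :=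
      exists_mem_maximalSubspaces_le ((coe_subset_of_mem_maximalSubspaces hVY).trans hYX.subset)
    have hWT : W ∈ T := by rw [← Finset.mem_coe, hT]; exact hWX
    have hne : V ≠ W := fun h => hVT (h ▸ hWT)
    refine ⟨W, Finset.mem_filter.mpr ⟨hWT, fun hWS => ?_⟩, lt_of_le_of_ne hVW hne⟩
    have hWY : W ∈ maximalSubspaces K Y := hS ▸ hWS
    exact hne (eq_of_mem_maximalSubspaces hVY (coe_subset_of_mem_maximalSubspaces hWY) hVW)

end MaximalSubspaces

section FinUnion

variable {d : ℕ}

theorem IsFinUnionSubspaces.iUnion {ι : Type*} [Finite ι] (v : ι → Submodule ℂ (Fin d → ℂ)) :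
    IsFinUnionSubspaces (⋃ i, (v i : Set (Fin d → ℂ))) := by
  obtain ⟨m, ⟨e⟩⟩ := Finite.exists_equiv_fin ι
  exact ⟨m, v ∘ e.symm, (e.symm.surjective.iUnion_comp fun i => (v i : Set (Fin d → ℂ))).symm⟩

theorem IsFinUnionSubspaces.finite_maximalSubspaces {X : Set (Fin d → ℂ)}
    (hX : IsFinUnionSubspaces X) : (maximalSubspaces ℂ X).Finite := by
  obtain ⟨m, v, rfl⟩ := hX
  exact (Set.finite_range v).subset (maximalSubspaces_iUnion_subset_range v)

theorem wellFoundedOn_isFinUnionSubspaces :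
    {X : Set (Fin d → ℂ) | IsFinUnionSubspaces X}.WellFoundedOn (· ⊂ ·) := by
  refine Subrelation.wf (fun {X Y} hXY => ?_) (InvImage.wf
    (fun X : {X : Set (Fin d → ℂ) // IsFinUnionSubspaces X} =>
      X.2.finite_maximalSubspaces.toFinset.val) Multiset.wellFounded_isDershowitzMannaLT)
  obtain ⟨m, v, hv⟩ := Y.2
  refine isDershowitzMannaLT_of_ssubset (Set.Finite.coe_toFinset _) (Set.Finite.coe_toFinset _)
    ?_ hXY
  rw [hv]
  exact iUnion_subset_biUnion_maximalSubspaces v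

end FinUnion

section Superoperator

variable {d : ℕ} {I : Type} [Fintype I] (F : I → Matrix (Fin d) (Fin d) ℂ)

theorem supSpan_mono {V W : Submodule ℂ (Fin d → ℂ)} (h : V ≤ W) : supSpan F V ≤ supSpan F W :=
  iSup_mono fun _ => Submodule.map_mono h

def preSpan (W : Submodule ℂ (Fin d → ℂ)) : Submodule ℂ (Fin d → ℂ) :=
  ⨅ i, W.comap (F i).mulVecLin

theorem supSpan_le_iff {V W : Submodule ℂ (Fin d → ℂ)} :
    supSpan F V ≤ W ↔ V ≤ preSpan F W := by
  simp only [supSpan, preSpan, iSup_le_iff, le_iInf_iff, Submodule.map_le_iff_le_comap]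

theorem supSpan_subset_applySet {X : Set (Fin d → ℂ)} {V : Submodule ℂ (Fin d → ℂ)}
    (hV : (V : Set (Fin d → ℂ)) ⊆ X) : (supSpan F V : Set (Fin d → ℂ)) ⊆ applySet F X :=
  fun _ hx => Set.mem_iUnion₂.mpr ⟨V, hV, hx⟩

theorem applySet_mono {X Y : Set (Fin d → ℂ)} (h : X ⊆ Y) : applySet F X ⊆ applySet F Y :=
  Set.iUnion₂_subset fun _ hV => supSpan_subset_applySet F (Set.Subset.trans hV h)

theorem applySet_iUnion {ι : Type*} [Finite ι] (v : ι → Submodule ℂ (Fin d → ℂ)) :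
    applySet F (⋃ i, (v i : Set (Fin d → ℂ))) = ⋃ i, (supSpan F (v i) : Set (Fin d → ℂ)) := by
  refine subset_antisymm (Set.iUnion₂_subset fun V hV => ?_)
    (Set.iUnion_subset fun i =>
      supSpan_subset_applySet F (Set.subset_iUnion (fun i => (v i : Set (Fin d → ℂ))) i))
  obtain ⟨i, hi⟩ := Submodule.exists_le_of_coe_subset_iUnion v hV
  exact (SetLike.coe_subset_coe.mpr (supSpan_mono F hi)).trans
    fun _ hy => Set.mem_iUnion.mpr ⟨i, hy⟩

end Superoperator

section Invariance

variable {d : ℕ} {Act : Type} {I : Act → Type} [∀ α, Fintype (I α)]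
  (E : (α : Act) → I α → Matrix (Fin d) (Fin d) ℂ)

theorem IsFinUnionSubspaces.iUnion_applySet [Finite Act] {X : Set (Fin d → ℂ)}
    (hX : IsFinUnionSubspaces X) : IsFinUnionSubspaces (⋃ α, applySet (E α) X) := by
  obtain ⟨m, v, rfl⟩ := hX
  have := IsFinUnionSubspaces.iUnion fun p : Act × Fin m => supSpan (E p.1) (v p.2)
  rwa [Set.iUnion_prod', ← Set.iUnion_congr fun α => applySet_iUnion (E α) v] at this

def stableCore (X : Set (Fin d → ℂ)) : Set (Fin d → ℂ) :=
  ⋃ (V : Submodule ℂ (Fin d → ℂ)) (_ : (V : Set (Fin d → ℂ)) ⊆ X ∧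
    ∀ α, (supSpan (E α) V : Set (Fin d → ℂ)) ⊆ X), (V : Set (Fin d → ℂ))

theorem stableCore_subset (X : Set (Fin d → ℂ)) : stableCore E X ⊆ X :=
  Set.iUnion₂_subset fun _ hV => hV.1

theorem subset_stableCore {X x : Set (Fin d → ℂ)} (hx : IsFinUnionSubspaces x) (hxX : x ⊆ X)
    (hEx : (⋃ α, applySet (E α) x) ⊆ X) : x ⊆ stableCore E X := by
  obtain ⟨m, w, rfl⟩ := hx
  refine Set.iUnion_subset fun i => Set.subset_iUnion₂_of_subset (w i) ⟨?_, fun α => ?_⟩ subset_rfl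
  · exact (Set.subset_iUnion (fun i => (w i : Set (Fin d → ℂ))) i).trans hxX
  · exact (supSpan_subset_applySet (E α) fun _ hy => Set.mem_iUnion.mpr ⟨i, hy⟩).trans
      ((Set.subset_iUnion _ α).trans hEx)

theorem supSpan_inf_iInf_preSpan_le (V : Submodule ℂ (Fin d → ℂ))
    (W : Act → Submodule ℂ (Fin d → ℂ)) (α : Act) :
    supSpan (E α) (V ⊓ ⨅ β, preSpan (E β) (W β)) ≤ W α :=
  (supSpan_le_iff (E α)).mpr (inf_le_right.trans (iInf_le _ α))

theorem stableCore_iUnion {ι : Type*} [Finite ι] (v : ι → Submodule ℂ (Fin d → ℂ)) :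
    stableCore E (⋃ i, (v i : Set (Fin d → ℂ))) = ⋃ p : ι × (Act → ι),
      ((v p.1 ⊓ ⨅ α, preSpan (E α) (v (p.2 α)) : Submodule ℂ (Fin d → ℂ)) : Set (Fin d → ℂ)) := by
  set U : ι × (Act → ι) → Submodule ℂ (Fin d → ℂ) :=
    fun p => v p.1 ⊓ ⨅ α, preSpan (E α) (v (p.2 α))
  refine subset_antisymm (Set.iUnion₂_subset fun V ⟨hVX, hEV⟩ => ?_)
    (Set.iUnion_subset fun p => Set.subset_iUnion₂_of_subset (U p) ⟨?_, fun α => ?_⟩ subset_rfl)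
  · obtain ⟨j, hj⟩ := Submodule.exists_le_of_coe_subset_iUnion v hVX
    choose t ht using fun α => Submodule.exists_le_of_coe_subset_iUnion v (hEV α)
    have hVU : V ≤ U (j, t) := le_inf hj (le_iInf fun α => (supSpan_le_iff (E α)).mp (ht α))
    exact (SetLike.coe_subset_coe.mpr hVU).trans fun _ hy => Set.mem_iUnion.mpr ⟨(j, t), hy⟩
  · exact (SetLike.coe_subset_coe.mpr inf_le_left).trans
      (Set.subset_iUnion (fun i => (v i : Set (Fin d → ℂ))) p.1)
  · exact (SetLike.coe_subset_coe.mpr (supSpan_inf_iInf_preSpan_le E _ _ α)).trans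
      (Set.subset_iUnion (fun i => (v i : Set (Fin d → ℂ))) (p.2 α))

theorem IsFinUnionSubspaces.stableCore [Finite Act] {X : Set (Fin d → ℂ)}
    (hX : IsFinUnionSubspaces X) : IsFinUnionSubspaces (stableCore E X) := by
  obtain ⟨m, v, rfl⟩ := hX
  rw [stableCore_iUnion]
  exact IsFinUnionSubspaces.iUnion _

theorem iUnion_applySet_stableCore_subset [Finite Act] {X : Set (Fin d → ℂ)}
    (hX : IsFinUnionSubspaces X) :
    (⋃ α, applySet (E α) (stableCore E X)) ⊆ X := by
  obtain ⟨m, v, rfl⟩ := hX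
  refine Set.iUnion_subset fun α => ?_
  rw [stableCore_iUnion, applySet_iUnion]
  exact Set.iUnion_subset fun p =>
    (SetLike.coe_subset_coe.mpr (supSpan_inf_iInf_preSpan_le E _ _ α)).trans
      (Set.subset_iUnion (fun i => (v i : Set (Fin d → ℂ))) (p.2 α))

end Invariance

theorem exists_maximal_invariant_general
    {d : ℕ} {Act : Type} [Fintype Act]
    {I : Act → Type} [∀ α, Fintype (I α)]
    (E : (α : Act) → I α → Matrix (Fin d) (Fin d) ℂ)
    (r : Set (Fin d → ℂ)) (hr : IsFinUnionSubspaces r) :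
    ∃ x : Set (Fin d → ℂ), x ⊆ r ∧ IsFinUnionSubspaces x ∧
      (⋃ α : Act, applySet (E α) x) = x ∧
      ∀ x' : Set (Fin d → ℂ), x' ⊆ r → IsFinUnionSubspaces x' →
        (⋃ α : Act, applySet (E α) x') = x' → x' ⊆ x := by
  obtain ⟨x, ⟨hx, hxr, hmax⟩, hmin⟩ :=
    (wellFoundedOn_isFinUnionSubspaces.subset fun _ h => h.1).exists_minimal
      (s := {X | IsFinUnionSubspaces X ∧ X ⊆ r ∧ ∀ x' : Set (Fin d → ℂ), x' ⊆ r →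
        IsFinUnionSubspaces x' → (⋃ α, applySet (E α) x') = x' → x' ⊆ X})
      ⟨r, hr, subset_rfl, fun _ h _ _ => h⟩
  have hcore : x ⊆ stableCore E x :=
    hmin ⟨hx.stableCore E, (stableCore_subset E x).trans hxr, fun x' hx'r hx' hinv =>
      subset_stableCore E hx' (hmax x' hx'r hx' hinv) (hinv.le.trans (hmax x' hx'r hx' hinv))⟩
      (stableCore_subset E x)
  have hsub : (⋃ α, applySet (E α) x) ⊆ x :=
    (Set.iUnion_mono fun α => applySet_mono (E α) hcore).trans
      (iUnion_applySet_stableCore_subset E hx)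
  have hsup : x ⊆ ⋃ α, applySet (E α) x :=
    hmin ⟨hx.iUnion_applySet E, hsub.trans hxr, fun x' hx'r hx' hinv =>
      hinv ▸ Set.iUnion_mono fun α => applySet_mono (E α) (hmax x' hx'r hx' hinv)⟩ hsub
  exact ⟨x, hxr, hx, hsub.antisymm hsup, hmax⟩

/-- For finitely many trace-preserving super-operators `E_α` and any finite
union of subspaces `r`, there is a maximal invariant `x ⊆ r`: a finite union of subspaces
with `⋃_α E_α⟨x⟩ = x` containing every finite union of subspaces `x' ⊆ r` with
`⋃_α E_α⟨x'⟩ = x'`. -/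
theorem exists_maximal_invariant
    {d : ℕ} {Act : Type} [Fintype Act]
    {I : Act → Type} [∀ α, Fintype (I α)]
    (E : (α : Act) → I α → Matrix (Fin d) (Fin d) ℂ)
    (htp : ∀ α, ∑ i, (E α i)ᴴ * E α i = (1 : Matrix (Fin d) (Fin d) ℂ))
    (r : Set (Fin d → ℂ)) (hr : IsFinUnionSubspaces r) :
    ∃ x : Set (Fin d → ℂ), x ⊆ r ∧ IsFinUnionSubspaces x ∧
      (⋃ α : Act, applySet (E α) x) = x ∧
      ∀ x' : Set (Fin d → ℂ), x' ⊆ r → IsFinUnionSubspaces x' →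
        (⋃ α : Act, applySet (E α) x') = x' → x' ⊆ x :=
  exists_maximal_invariant_general E r hr
end
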